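/- arXiv:1502.04574 — 3 statements merged into one kernel-verified Lean document; each statement's English description precedes it below -/
import Mathlib

section
/- Every complex polynomial function P : ℂ → ℂ is a closed map: the image under P of every closed subset of ℂ is closed. -/
theorem stmt_2 (p : Polynomial ℂ) : IsClosedMap (fun z => p.eval z) := by
  by_cases hd : 0 < p.degree
  · have hprop : IsProperMap (fun z : ℂ => p.eval z) := by
      rw [isProperMap_iff_tendsto_cocompact]
      refine ⟨p.continuous_aeval.congr (by simp), ?_⟩
      apply tendsto_cocompact_of_tendsto_dist_comp_atTop (0 : ℂ)
      simpa [dist_eq_norm] using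
        p.tendsto_norm_atTop hd (z := fun z : ℂ => z) tendsto_norm_cocompact_atTop
    exact hprop.isClosedMap
  · push_neg at hd
    rw [Polynomial.eq_C_of_degree_le_zero hd]
    simp only [Polynomial.eval_C]
    intro S hS
    rcases S.eq_empty_or_nonempty with rfl | hne
    · simp
    · have : (fun _ : ℂ => p.coeff 0) '' S = {p.coeff 0} := by
        exact Set.Nonempty.image_const hne _
      rw [this]; exact isClosed_singleton
end

section
/- Let f : ℂ → ℂ be a nonconstant polynomial, D = {z : |z| ≤ r} a closed disc with f nonvanishing on the boundary circle B = {|z| = r}, and t ∈ ℂ. If v ∈ D realizes the minimum of |t − f(z)| over z ∈ D and t ≠ f(v), then v is a critical point of f or v ∈ B. -/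
open Filter Topology

theorem Complex.deriv_eq_zero_of_isLocalMin_norm {f : ℂ → ℂ} {c : ℂ}
    (hf : ∀ᶠ z in 𝓝 c, DifferentiableAt ℂ f z) (hc : IsLocalMin (norm ∘ f) c) (hc0 : f c ≠ 0) :
    deriv f c = 0 := by
  have hconst : f =ᶠ[𝓝 c] fun _ ↦ f c :=
    (eventually_eq_or_eq_zero_of_isLocalMin_norm hf hc).resolve_right hc0
  rw [hconst.deriv_eq, deriv_const]

theorem Polynomial.eval_derivative_eq_zero_of_isLocalMin_norm_sub {p : Polynomial ℂ} {t v : ℂ}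
    (hmin : IsLocalMin (fun z ↦ ‖t - p.eval z‖) v) (ht : t ≠ p.eval v) :
    (Polynomial.derivative p).eval v = 0 := by
  have hdiff : ∀ᶠ z in 𝓝 v, DifferentiableAt ℂ (fun z ↦ t - p.eval z) z :=
    .of_forall fun z ↦ (p.differentiableAt).const_sub t
  have := Complex.deriv_eq_zero_of_isLocalMin_norm hdiff hmin (sub_ne_zero.mpr ht)
  rwa [deriv_const_sub, Polynomial.deriv, neg_eq_zero] at this

theorem stmt_11_general (p : Polynomial ℂ) (r : ℝ)
    (t v : ℂ) (hv : ‖v‖ ≤ r)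
    (hmin : ∀ z : ℂ, ‖z‖ ≤ r →
      ‖t - p.eval v‖ ≤ ‖t - p.eval z‖)
    (ht : t ≠ p.eval v) :
    (Polynomial.derivative p).eval v = 0 ∨ ‖v‖ = r := by
  rcases hv.lt_or_eq with hlt | hbdry
  · left
    have hinterior : Metric.ball (0 : ℂ) r ∈ 𝓝 v :=
      Metric.isOpen_ball.mem_nhds (mem_ball_zero_iff.mpr hlt)
    refine Polynomial.eval_derivative_eq_zero_of_isLocalMin_norm_sub ?_ ht
    filter_upwards [hinterior] with z hz
    exact hmin z (mem_ball_zero_iff.mp hz).le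
  · exact .inr hbdry

theorem stmt_11 (p : Polynomial ℂ) (hdeg : 1 ≤ p.natDegree) (r : ℝ) (hr : 0 < r)
    (hB : ∀ z : ℂ, ‖z‖ = r → p.eval z ≠ 0)
    (t v : ℂ) (hv : ‖v‖ ≤ r)
    (hmin : ∀ z : ℂ, ‖z‖ ≤ r →
      ‖t - p.eval v‖ ≤ ‖t - p.eval z‖)
    (ht : t ≠ p.eval v) :
    (Polynomial.derivative p).eval v = 0 ∨ ‖v‖ = r :=
  stmt_11_general p r t v hv hmin ht
end

section
/- (Maehara's Crossroads Theorem) Let σ, τ : [0,1] → [-1,1]² be continuous paths in the square with σ(0) on the left edge (σ(0)₁ = -1), σ(1) on the right edge (σ(1)₁ = 1), τ(0) on the bottom edge (τ(0)₂ = -1), and τ(1) on the top edge (τ(1)₂ = 1). Then there exist s, t ∈ [0,1] with σ(s) = τ(t). -/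
/-!
If the paths never meet, `F (s, t) = σ s - τ t`, read in `ℂ`, is a nonvanishing map on the square,
so it has a continuous argument `θ` (lift `F` through the covering `exp : ℂ → ℂ \ {0}`). On the
bottom, right, top and left sides, `F` lies in the upper, right, lower and left closed half-planes
respectively, so along each side `θ` stays within `π/2` of one determination `α + 2πk` of the
half-plane's direction. Matching these determinations at the four corners forces `θ` to change by
`2π` around the boundary, which is absurd for a single-valued function.
-/

open Set Real

theorem abs_sub_two_pi_mul_le_pi_div_two {y : ℝ} {k : ℤ} (hcos : 0 ≤ cos y)
    (hy : |y - 2 * π * k| ≤ π) : |y - 2 * π * k| ≤ π / 2 := by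
  by_contra! h
  have hneg := cos_neg_of_pi_div_two_lt_of_lt h (by linarith [pi_pos])
  rw [cos_abs, show y - 2 * π * k = y - k * (2 * π) by ring, cos_sub_int_mul_two_pi] at hneg
  linarith

theorem IsPreconnected.exists_int_abs_sub_two_pi_mul_le {α : Type*} [TopologicalSpace α]
    {s : Set α} {f : α → ℝ} (hs : IsPreconnected s) (hf : ContinuousOn f s)
    (hcos : ∀ x ∈ s, 0 ≤ cos (f x)) : ∃ k : ℤ, ∀ x ∈ s, |f x - 2 * π * k| ≤ π / 2 := by
  rcases s.eq_empty_or_nonempty with rfl | ⟨x₀, hx₀⟩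
  · exact ⟨0, by simp⟩
  have h2π : 0 < 2 * π := by positivity
  set k := round (f x₀ / (2 * π))
  have hk : |f x₀ - 2 * π * k| ≤ π :=
    calc |f x₀ - 2 * π * k| = |2 * π * (f x₀ / (2 * π) - k)| := by
          congr 1; field_simp
      _ = 2 * π * |f x₀ / (2 * π) - k| := by rw [abs_mul, abs_of_pos h2π]
      _ ≤ 2 * π * (1 / 2) := by gcongr; exact abs_sub_round _
      _ = π := by ring
  -- `f '' s` cannot reach `2πk ± π`, where the cosine is `-1`
  have himage : f '' s ⊆ Metric.ball (2 * π * k) π := by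
    refine (hs.image f hf).subset_left_of_subset_union Metric.isOpen_ball
      Metric.isClosed_closedBall.isOpen_compl
      (disjoint_compl_right.mono_left Metric.ball_subset_closedBall) ?_
      ⟨f x₀, mem_image_of_mem f hx₀, ?_⟩
    · rintro _ ⟨x, hx, rfl⟩
      by_cases hxk : f x ∈ Metric.closedBall (2 * π * k) π
      · left
        rw [Metric.mem_closedBall, Real.dist_eq] at hxk
        rw [Metric.mem_ball, Real.dist_eq]
        linarith [abs_sub_two_pi_mul_le_pi_div_two (hcos x hx) hxk, pi_pos]
      · exact Or.inr hxk
    · rw [Metric.mem_ball, Real.dist_eq]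
      linarith [abs_sub_two_pi_mul_le_pi_div_two (hcos x₀ hx₀) hk, pi_pos]
  refine ⟨k, fun x hx => abs_sub_two_pi_mul_le_pi_div_two (hcos x hx) ?_⟩
  have := himage (mem_image_of_mem f hx)
  rw [Metric.mem_ball, Real.dist_eq] at this
  exact this.le

theorem le_of_two_pi_mul_le_two_pi_mul_add {m n : ℤ} {c : ℝ} (hc : c < 2 * π)
    (h : 2 * π * m ≤ 2 * π * n + c) : m ≤ n := by
  have : (m : ℝ) < n + 1 := by
    by_contra! h'
    nlinarith [pi_pos]
  exact Int.lt_add_one_iff.mp (by exact_mod_cast this)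

theorem not_continuousOn_square_of_boundary_signs {θ : ℝ × ℝ → ℝ}
    (hbot : ∀ s ∈ Icc (0 : ℝ) 1, 0 ≤ sin (θ (s, 0)))
    (hright : ∀ t ∈ Icc (0 : ℝ) 1, 0 ≤ cos (θ (1, t)))
    (htop : ∀ s ∈ Icc (0 : ℝ) 1, sin (θ (s, 1)) ≤ 0)
    (hleft : ∀ t ∈ Icc (0 : ℝ) 1, cos (θ (0, t)) ≤ 0) :
    ¬ ContinuousOn θ (Icc 0 1 ×ˢ Icc 0 1) := by
  intro hθ
  have h0 : (0 : ℝ) ∈ Icc 0 1 := left_mem_Icc.2 zero_le_one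
  have h1 : (1 : ℝ) ∈ Icc 0 1 := right_mem_Icc.2 zero_le_one
  have hrow : ∀ t ∈ Icc (0 : ℝ) 1, ContinuousOn (fun s => θ (s, t)) (Icc 0 1) := fun t ht =>
    hθ.comp (by fun_prop) fun s hs => ⟨hs, ht⟩
  have hcol : ∀ s ∈ Icc (0 : ℝ) 1, ContinuousOn (fun t => θ (s, t)) (Icc 0 1) := fun s hs =>
    hθ.comp (by fun_prop) fun t ht => ⟨hs, ht⟩
  obtain ⟨k₁, hk₁⟩ := isPreconnected_Icc.exists_int_abs_sub_two_pi_mul_le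
    (f := fun s => θ (s, 0) - π / 2) ((hrow 0 h0).sub continuousOn_const) fun s hs => by
      rw [cos_sub_pi_div_two]; exact hbot s hs
  obtain ⟨k₂, hk₂⟩ := isPreconnected_Icc.exists_int_abs_sub_two_pi_mul_le (hcol 1 h1) hright
  obtain ⟨k₃, hk₃⟩ := isPreconnected_Icc.exists_int_abs_sub_two_pi_mul_le
    (f := fun s => θ (s, 1) + π / 2) ((hrow 1 h1).add continuousOn_const) fun s hs => by
      rw [cos_add_pi_div_two]; linarith [htop s hs]
  obtain ⟨k₄, hk₄⟩ := isPreconnected_Icc.exists_int_abs_sub_two_pi_mul_le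
    (f := fun t => θ (0, t) - π) ((hcol 0 h0).sub continuousOn_const) fun t ht => by
      rw [cos_sub_pi]; linarith [hleft t ht]
  have hπ := pi_pos
  -- the intervals of two adjacent sides meet at their common corner
  have h21 : k₂ ≤ k₁ := le_of_two_pi_mul_le_two_pi_mul_add (c := 3 * π / 2) (by linarith)
    (by linarith [abs_le.1 (hk₁ 1 h1), abs_le.1 (hk₂ 0 h0)])
  have h32 : k₃ ≤ k₂ := le_of_two_pi_mul_le_two_pi_mul_add (c := 3 * π / 2) (by linarith)
    (by linarith [abs_le.1 (hk₂ 1 h1), abs_le.1 (hk₃ 1 h1)])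
  have h43 : k₄ + 1 ≤ k₃ := le_of_two_pi_mul_le_two_pi_mul_add (c := 3 * π / 2) (by linarith)
    (by push_cast; linarith [abs_le.1 (hk₃ 0 h0), abs_le.1 (hk₄ 1 h1)])
  have h14 : k₁ ≤ k₄ := le_of_two_pi_mul_le_two_pi_mul_add (c := 3 * π / 2) (by linarith)
    (by linarith [abs_le.1 (hk₄ 0 h0), abs_le.1 (hk₁ 0 h0)])
  omega

theorem Complex.exists_continuousMap_exp_eq {X : Type*} [TopologicalSpace X]
    [SimplyConnectedSpace X] [LocallyPathConnectedSpace X] (F : C(X, ℂ)) (hF : ∀ x, F x ≠ 0) :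
    ∃ L : C(X, ℂ), ∀ x, exp (L x) = F x := by
  obtain ⟨x₀⟩ := PathConnectedSpace.nonempty (X := X)
  obtain ⟨L, -, hL⟩ :=
    (isCoveringMapOn_exp.existsUnique_continuousMap_lifts F (exp_log (hF x₀)) hF).exists
  exact ⟨L, congrFun hL⟩

theorem exists_mem_square_eq_zero_of_boundary_signs {F : ℝ × ℝ → ℂ}
    (hF : ContinuousOn F (Icc 0 1 ×ˢ Icc 0 1))
    (hbot : ∀ s ∈ Icc (0 : ℝ) 1, 0 ≤ (F (s, 0)).im)
    (hright : ∀ t ∈ Icc (0 : ℝ) 1, 0 ≤ (F (1, t)).re)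
    (htop : ∀ s ∈ Icc (0 : ℝ) 1, (F (s, 1)).im ≤ 0)
    (hleft : ∀ t ∈ Icc (0 : ℝ) 1, (F (0, t)).re ≤ 0) :
    ∃ p ∈ Icc (0 : ℝ) 1 ×ˢ Icc (0 : ℝ) 1, F p = 0 := by
  by_contra! hne
  -- clamp to the square, so that the lift lives on the simply connected plane
  set r : ℝ × ℝ → ℝ × ℝ := Prod.map (projIcc 0 1 zero_le_one ·) (projIcc 0 1 zero_le_one ·)
  have hr : ∀ p, r p ∈ Icc (0 : ℝ) 1 ×ˢ Icc (0 : ℝ) 1 := fun p => ⟨Subtype.prop _, Subtype.prop _⟩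
  have hr_eq : ∀ p ∈ Icc (0 : ℝ) 1 ×ˢ Icc (0 : ℝ) 1, r p = p := fun _ ⟨hs, ht⟩ => by
    simp only [r, Prod.map, projIcc_of_mem zero_le_one hs, projIcc_of_mem zero_le_one ht]
  obtain ⟨L, hL⟩ := Complex.exists_continuousMap_exp_eq
    ⟨F ∘ r, hF.comp_continuous (by fun_prop) hr⟩ fun p => hne _ (hr p)
  have hexp : ∀ s ∈ Icc (0 : ℝ) 1, ∀ t ∈ Icc (0 : ℝ) 1, Complex.exp (L (s, t)) = F (s, t) :=
    fun s hs t ht => by simpa [hr_eq (s, t) ⟨hs, ht⟩] using hL (s, t)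
  have h0 : (0 : ℝ) ∈ Icc 0 1 := left_mem_Icc.2 zero_le_one
  have h1 : (1 : ℝ) ∈ Icc 0 1 := right_mem_Icc.2 zero_le_one
  refine not_continuousOn_square_of_boundary_signs (θ := fun p => (L p).im) ?_ ?_ ?_ ?_
    (Complex.continuous_im.comp L.continuous).continuousOn
  · intro s hs
    have := hbot s hs
    rw [← hexp s hs 0 h0, Complex.exp_im] at this
    exact nonneg_of_mul_nonneg_right this (Real.exp_pos _)
  · intro t ht
    have := hright t ht
    rw [← hexp 1 h1 t ht, Complex.exp_re] at this
    exact nonneg_of_mul_nonneg_right this (Real.exp_pos _)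
  · intro s hs
    have := htop s hs
    rw [← hexp s hs 1 h1, Complex.exp_im] at this
    exact nonpos_of_mul_nonpos_right this (Real.exp_pos _)
  · intro t ht
    have := hleft t ht
    rw [← hexp 0 h0 t ht, Complex.exp_re] at this
    exact nonpos_of_mul_nonpos_right this (Real.exp_pos _)

theorem stmt_16 (σ τ : ℝ → ℝ × ℝ)
    (hσc : ContinuousOn σ (Set.Icc 0 1)) (hτc : ContinuousOn τ (Set.Icc 0 1))
    (hσsq : ∀ t ∈ Set.Icc (0 : ℝ) 1, σ t ∈ Set.Icc (-1 : ℝ) 1 ×ˢ Set.Icc (-1 : ℝ) 1)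
    (hτsq : ∀ t ∈ Set.Icc (0 : ℝ) 1, τ t ∈ Set.Icc (-1 : ℝ) 1 ×ˢ Set.Icc (-1 : ℝ) 1)
    (hσ0 : (σ 0).1 = -1) (hσ1 : (σ 1).1 = 1)
    (hτ0 : (τ 0).2 = -1) (hτ1 : (τ 1).2 = 1) :
    ∃ s ∈ Set.Icc (0 : ℝ) 1, ∃ t ∈ Set.Icc (0 : ℝ) 1, σ s = τ t := by
  obtain ⟨⟨s, t⟩, ⟨hs, ht⟩, hst⟩ := exists_mem_square_eq_zero_of_boundary_signs
    (F := fun p => Complex.equivRealProdCLM.symm (σ p.1 - τ p.2))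
    (Complex.equivRealProdCLM.symm.continuous.comp_continuousOn
      ((hσc.comp continuousOn_fst fun p hp => hp.1).sub
        (hτc.comp continuousOn_snd fun p hp => hp.2)))
    (fun s hs => show 0 ≤ (σ s).2 - (τ 0).2 by linarith [(hσsq s hs).2.1])
    (fun t ht => show 0 ≤ (σ 1).1 - (τ t).1 by linarith [(hτsq t ht).1.2])
    (fun s hs => show (σ s).2 - (τ 1).2 ≤ 0 by linarith [(hσsq s hs).2.2])
    (fun t ht => show (σ 0).1 - (τ t).1 ≤ 0 by linarith [(hτsq t ht).1.1])
  exact ⟨s, hs, t, ht, sub_eq_zero.1 (Complex.equivRealProdCLM.symm.map_eq_zero_iff.1 hst)⟩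
end
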